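/- arXiv:1711.03887 — 2 statements merged into one kernel-verified Lean document; each statement's English description precedes it below -/
import Mathlib

section
/- For all nonnegative integers x, y bounded by M = 2^m, |x - y| = Σ_{i=0}^{m} 2^i · η(⌊x/2^i⌋, ⌊y/2^i⌋), where η(u,v) = [u odd ∧ v even ∧ u ≥ v] - [u even ∧ v odd ∧ u ≥ v] + [v odd ∧ u even ∧ v ≥ u] - [v even ∧ u odd ∧ v ≥ u]. -/
/-!
Writing `x = 2a + r`, `y = 2b + s` with `r, s ∈ {0, 1}`, one has `|x - y| = η(x, y) + 2 |a - b|`: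
when the parities agree the low bits cancel, and otherwise they add or subtract one depending on
which of `x`, `y` is larger. Unwinding this `m + 1` times leaves the remainder
`2^(m+1) |x / 2^(m+1) - y / 2^(m+1)|`, which vanishes since both quotients are `0`.
-/

def absSubDigit (u v : ℤ) : ℤ :=
  (if Odd u ∧ Even v ∧ v ≤ u then (1 : ℤ) else 0)
    - (if Even u ∧ Odd v ∧ v ≤ u then (1 : ℤ) else 0)
    + (if Odd v ∧ Even u ∧ u ≤ v then (1 : ℤ) else 0)
    - (if Even v ∧ Odd u ∧ u ≤ v then (1 : ℤ) else 0)

lemma abs_sub_eq_absSubDigit_add_two_mul (x y : ℤ) :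
    |x - y| = absSubDigit x y + 2 * |x / 2 - y / 2| := by
  unfold absSubDigit
  rcases abs_cases (x - y) with ⟨h, _⟩ | ⟨h, _⟩ <;>
  rcases abs_cases (x / 2 - y / 2) with ⟨h', _⟩ | ⟨h', _⟩ <;>
  rw [h, h'] <;>
  simp only [Int.odd_iff, Int.even_iff] <;>
  split_ifs <;> omega

lemma abs_sub_eq_sum_absSubDigit_add (n : ℕ) (x y : ℤ) :
    |x - y| = ∑ i ∈ Finset.range n, 2 ^ i * absSubDigit (x / 2 ^ i) (y / 2 ^ i)
      + 2 ^ n * |x / 2 ^ n - y / 2 ^ n| := by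
  induction n with
  | zero => simp
  | succ n ih =>
    have hdiv (z : ℤ) : z / 2 ^ (n + 1) = z / 2 ^ n / 2 := by
      rw [pow_succ, Int.ediv_ediv_of_nonneg (by positivity)]
    rw [ih, abs_sub_eq_absSubDigit_add_two_mul (x / 2 ^ n), Finset.sum_range_succ, hdiv, hdiv,
      pow_succ]
    ring

theorem abs_sub_unwind (m : ℕ) (x y : ℤ) (hx : 0 ≤ x) (hy : 0 ≤ y)
    (hxM : x < 2 ^ m) (hyM : y < 2 ^ m) :
    |x - y| = ∑ i ∈ Finset.range (m + 1), (2 : ℤ) ^ i *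
      (let u := x / 2 ^ i; let v := y / 2 ^ i;
        (if Odd u ∧ Even v ∧ v ≤ u then (1 : ℤ) else 0)
        - (if Even u ∧ Odd v ∧ v ≤ u then (1 : ℤ) else 0)
        + (if Odd v ∧ Even u ∧ u ≤ v then (1 : ℤ) else 0)
        - (if Even v ∧ Odd u ∧ u ≤ v then (1 : ℤ) else 0)) := by
  have hM : (2 : ℤ) ^ m < 2 ^ (m + 1) := pow_lt_pow_right₀ one_lt_two m.lt_succ_self
  have hx0 : x / 2 ^ (m + 1) = 0 := Int.ediv_eq_zero_of_lt hx (hxM.trans hM)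
  have hy0 : y / 2 ^ (m + 1) = 0 := Int.ediv_eq_zero_of_lt hy (hyM.trans hM)
  have h := abs_sub_eq_sum_absSubDigit_add (m + 1) x y
  rwa [hx0, hy0, sub_self, abs_zero, mul_zero, add_zero] at h
end

section
/- For all natural numbers x, y and nonnegative integers a, b, x^a·y^b·[x < y] = 2^{a+b}·⌊x/2⌋^a·⌊y/2⌋^b·[⌊x/2⌋ < ⌊y/2⌋] + x^a·(y-1)^b·[x even ∧ y odd ∧ x = y-1] + (x^a y^b - (x-1)^a y^b)·[x odd ∧ y even ∧ x < y] + (x^a y^b - x^a (y-1)^b)·[x even ∧ y odd ∧ x < y] + (x^a y^b - (x-1)^a (y-1)^b)·[x odd ∧ y odd ∧ x < y]. -/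
/-!
Write `x = 2⌊x/2⌋ + [x odd]` and likewise for `y`. Then `2^(a+b) ⌊x/2⌋^a ⌊y/2⌋^b` is the
monomial evaluated at the even parts `x - [x odd]`, `y - [y odd]`, and `x < y` holds exactly when
`⌊x/2⌋ < ⌊y/2⌋` or `x` is even and `y = x + 1`. In each of the four parity cases at most one
correction term survives, and it turns the monomial at the even parts back into `x^a y^b`.
-/

lemma pow_add_mul_pow_mul_pow {M : Type*} [CommMonoid M] (c u v : M) (a b : ℕ) :
    c ^ (a + b) * u ^ a * v ^ b = (c * u) ^ a * (c * v) ^ b := by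
  rw [mul_pow, mul_pow, pow_add]
  ac_rfl

namespace Int

lemma ediv_two_lt_ediv_two_iff (x y : ℤ) :
    x / 2 < y / 2 ↔ x < y ∧ ¬(Even x ∧ Odd y ∧ x = y - 1) := by
  rw [Int.even_iff, Int.odd_iff]
  omega

end Int

theorem mdom_decomposition_general (x y : ℤ) (a b : ℕ) :
    x ^ a * y ^ b * (if x < y then (1 : ℤ) else 0) =
      2 ^ (a + b) * (x / 2) ^ a * (y / 2) ^ b * (if x / 2 < y / 2 then (1 : ℤ) else 0)
      + x ^ a * (y - 1) ^ b * (if Even x ∧ Odd y ∧ x = y - 1 then (1 : ℤ) else 0)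
      + (x ^ a * y ^ b - (x - 1) ^ a * y ^ b) * (if Odd x ∧ Even y ∧ x < y then (1 : ℤ) else 0)
      + (x ^ a * y ^ b - x ^ a * (y - 1) ^ b) * (if Even x ∧ Odd y ∧ x < y then (1 : ℤ) else 0)
      + (x ^ a * y ^ b - (x - 1) ^ a * (y - 1) ^ b) *
          (if Odd x ∧ Odd y ∧ x < y then (1 : ℤ) else 0) := by
  simp only [pow_add_mul_pow_mul_pow, Int.ediv_two_lt_ediv_two_iff]
  by_cases hx : Even x <;> by_cases hy : Even y <;>
    simp only [hx, hy, ← Int.not_even_iff_odd, Int.two_mul_ediv_two_of_even,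
      Int.two_mul_ediv_two_of_odd, not_true_eq_false, not_false_eq_true, true_and, and_true,
      false_and, and_false] <;>
    split_ifs <;> first | (exfalso; omega) | ring

theorem mdom_decomposition (x y : ℤ) (hx : 0 ≤ x) (hy : 0 ≤ y) (a b : ℕ) :
    x ^ a * y ^ b * (if x < y then (1 : ℤ) else 0) =
      2 ^ (a + b) * (x / 2) ^ a * (y / 2) ^ b * (if x / 2 < y / 2 then (1 : ℤ) else 0)
      + x ^ a * (y - 1) ^ b * (if Even x ∧ Odd y ∧ x = y - 1 then (1 : ℤ) else 0)
      + (x ^ a * y ^ b - (x - 1) ^ a * y ^ b) * (if Odd x ∧ Even y ∧ x < y then (1 : ℤ) else 0)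
      + (x ^ a * y ^ b - x ^ a * (y - 1) ^ b) * (if Even x ∧ Odd y ∧ x < y then (1 : ℤ) else 0)
      + (x ^ a * y ^ b - (x - 1) ^ a * (y - 1) ^ b) *
          (if Odd x ∧ Odd y ∧ x < y then (1 : ℤ) else 0) :=
  mdom_decomposition_general x y a b
end
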